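/- arXiv:2511.03177 — 2 statements merged into one kernel-verified Lean document; each statement's English description precedes it below -/
import Mathlib

section
/- Let ℚ⟨Y⟩ be the free associative ℚ-algebra on letters Y = {y_n : n ≥ 1}, with the harmonic product * defined recursively by 1 * w = w * 1 = w and y_{k₁}w₁ * y_{k₂}w₂ = y_{k₁}(w₁ * y_{k₂}w₂) + y_{k₂}(y_{k₁}w₁ * w₂) + y_{k₁+k₂}(w₁ * w₂). Then (ℚ⟨Y⟩, *) is a commutative and associative ℚ-algebra with unit 1. -/
/-! The recursion defining the harmonic product of words extends bilinearly: writing `a f` for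
`consLetter a f`, one has `a f * b g = a (f * b g) + b (a f * g) + (a + b) (f * g)` for arbitrary
`f, g`. Expanding `(a f * b g) * c h` and `a f * (b g * c h)` with it gives, in both cases, one
term `s (…)` for each nonempty subset of the leading letters `a, b, c`, with `s` the sum of that
subset; matching these seven terms pairwise reduces associativity on words to shorter words. -/

/-- Words in the letters y_k, k ∈ ℤ_{>0}. -/
abbrev YW : Type := List ℕ+

/-- ℚ⟨Y⟩, the free associative ℚ-algebra on the letters y_k (k ≥ 1), realized as
finitely supported ℚ-linear combinations of words. -/
abbrev HY : Type := YW →₀ ℚ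

/-- Harmonic (stuffle) product of two words, as the list (with multiplicity) of
resulting words, defined by the recursion 1 * w = w * 1 = w and
y_{k₁}w₁ * y_{k₂}w₂ = y_{k₁}(w₁ * y_{k₂}w₂) + y_{k₂}(y_{k₁}w₁ * w₂) + y_{k₁+k₂}(w₁ * w₂). -/
def st : YW → YW → List YW
  | [], v => [v]
  | u, [] => [u]
  | a :: u, b :: v =>
      ((st u (b :: v)).map (a :: ·)) ++ ((st (a :: u) v).map (b :: ·))
        ++ ((st u v).map ((a + b) :: ·))
termination_by u v => u.length + v.length

/-- The harmonic product on ℚ⟨Y⟩, the ℚ-bilinear extension of `st` on words. -/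
noncomputable def hMul (f g : HY) : HY :=
  f.sum fun u a => g.sum fun v b =>
    (a * b) • ((st u v).map fun w => Finsupp.single w (1 : ℚ)).sum

open Finsupp

noncomputable def wordStuffle (u v : YW) : HY := ((st u v).map fun w => single w (1 : ℚ)).sum

lemma wordStuffle_nil_left (v : YW) : wordStuffle [] v = single v 1 := by
  simp [wordStuffle, st]

lemma wordStuffle_nil_right (u : YW) : wordStuffle u [] = single u 1 := by
  cases u <;> simp [wordStuffle, st]

noncomputable def consLetter (a : ℕ+) : HY →ₗ[ℚ] HY := lmapDomain ℚ ℚ (a :: ·)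

lemma consLetter_single (a : ℕ+) (w : YW) (c : ℚ) :
    consLetter a (single w c) = single (a :: w) c :=
  mapDomain_single

lemma consLetter_wordStuffle (a : ℕ+) (u v : YW) :
    consLetter a (wordStuffle u v) = ((st u v).map fun w => single (a :: w) (1 : ℚ)).sum := by
  simp [wordStuffle, map_list_sum, consLetter_single, Function.comp_def]

lemma wordStuffle_cons_cons (a b : ℕ+) (u v : YW) :
    wordStuffle (a :: u) (b :: v) = consLetter a (wordStuffle u (b :: v)) +
      consLetter b (wordStuffle (a :: u) v) + consLetter (a + b) (wordStuffle u v) := by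
  rw [wordStuffle, st]
  simp only [List.map_append, List.sum_append, consLetter_wordStuffle, List.map_map,
    Function.comp_def]

lemma wordStuffle_comm (u v : YW) : wordStuffle u v = wordStuffle v u := by
  induction u, v using st.induct with
  | case1 v => rw [wordStuffle_nil_left, wordStuffle_nil_right]
  | case2 u _ => rw [wordStuffle_nil_left, wordStuffle_nil_right]
  | case3 a u b v ih₁ ih₂ ih₃ =>
      rw [wordStuffle_cons_cons, wordStuffle_cons_cons, ih₁, ih₂, ih₃, add_comm a b]
      abel

noncomputable def stuffle : HY →ₗ[ℚ] HY →ₗ[ℚ] HY :=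
  lsum ℚ fun u => LinearMap.toSpanSingleton ℚ _ <|
    lsum ℚ fun v => LinearMap.toSpanSingleton ℚ HY (wordStuffle u v)

lemma stuffle_single_single (u v : YW) (a b : ℚ) :
    stuffle (single u a) (single v b) = (a * b) • wordStuffle u v := by
  simp [stuffle, smul_smul]

lemma hMul_eq_stuffle (f g : HY) : hMul f g = stuffle f g := by
  simp [hMul, stuffle, Finsupp.sum, LinearMap.sum_apply, Finset.smul_sum, smul_smul, wordStuffle]

theorem HY.induction_on_word {p : HY → Prop} (f : HY)
    (add : ∀ f g, p f → p g → p (f + g)) (smul : ∀ (c : ℚ) f, p f → p (c • f))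
    (word : ∀ w, p (single w 1)) : p f := by
  induction f using Finsupp.induction_linear with
  | zero => simpa using smul 0 _ (word [])
  | add f g hf hg => exact add f g hf hg
  | single w c => simpa using smul c _ (word w)

lemma stuffle_comm (f g : HY) : stuffle f g = stuffle g f := by
  suffices stuffle.flip = stuffle from LinearMap.congr_fun₂ this g f
  ext u v : 4
  simp [stuffle_single_single, wordStuffle_comm]

lemma stuffle_one_left (f : HY) : stuffle (single [] 1) f = f := by
  suffices stuffle (single [] 1) = LinearMap.id from LinearMap.congr_fun this f
  ext w : 3
  simp [stuffle_single_single, wordStuffle_nil_left]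

lemma stuffle_one_right (f : HY) : stuffle f (single [] 1) = f := by
  suffices stuffle.flip (single [] 1) = LinearMap.id from LinearMap.congr_fun this f
  ext w : 3
  simp [stuffle_single_single, wordStuffle_nil_right]

lemma stuffle_consLetter_consLetter (a b : ℕ+) (f g : HY) :
    stuffle (consLetter a f) (consLetter b g) = consLetter a (stuffle f (consLetter b g)) +
      consLetter b (stuffle (consLetter a f) g) + consLetter (a + b) (stuffle f g) := by
  induction f using HY.induction_on_word generalizing g with
  | add f f' hf hf' => simp only [map_add, LinearMap.add_apply, hf, hf']; abel
  | smul c f hf => simp only [map_smul, LinearMap.smul_apply, hf, smul_add]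
  | word u =>
    induction g using HY.induction_on_word with
    | add g g' hg hg' => simp only [map_add, hg, hg']; abel
    | smul c g hg => simp only [map_smul, hg, smul_add]
    | word v =>
      simp only [consLetter_single, stuffle_single_single, wordStuffle_cons_cons, one_smul,
        mul_one]

lemma stuffle_stuffle_consLetter (a b c : ℕ+) (f g h : HY) :
    stuffle (stuffle (consLetter a f) (consLetter b g)) (consLetter c h) =
      consLetter a (stuffle (stuffle f (consLetter b g)) (consLetter c h)) +
      consLetter b (stuffle (stuffle (consLetter a f) g) (consLetter c h)) +
      consLetter c (stuffle (stuffle (consLetter a f) (consLetter b g)) h) +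
      consLetter (a + b) (stuffle (stuffle f g) (consLetter c h)) +
      consLetter (a + c) (stuffle (stuffle f (consLetter b g)) h) +
      consLetter (b + c) (stuffle (stuffle (consLetter a f) g) h) +
      consLetter (a + b + c) (stuffle (stuffle f g) h) := by
  simp only [stuffle_consLetter_consLetter, map_add, LinearMap.add_apply, add_assoc]
  abel

lemma consLetter_stuffle_stuffle (a b c : ℕ+) (f g h : HY) :
    stuffle (consLetter a f) (stuffle (consLetter b g) (consLetter c h)) =
      consLetter a (stuffle f (stuffle (consLetter b g) (consLetter c h))) +
      consLetter b (stuffle (consLetter a f) (stuffle g (consLetter c h))) +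
      consLetter c (stuffle (consLetter a f) (stuffle (consLetter b g) h)) +
      consLetter (a + b) (stuffle f (stuffle g (consLetter c h))) +
      consLetter (a + c) (stuffle f (stuffle (consLetter b g) h)) +
      consLetter (b + c) (stuffle (consLetter a f) (stuffle g h)) +
      consLetter (a + b + c) (stuffle f (stuffle g h)) := by
  simp only [stuffle_consLetter_consLetter, map_add, add_assoc]
  abel

theorem stuffle_assoc_single : ∀ u v t : YW,
    stuffle (stuffle (single u 1) (single v 1)) (single t 1) =
      stuffle (single u 1) (stuffle (single v 1) (single t 1))
  | [], v, t => by rw [stuffle_one_left, stuffle_one_left]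
  | u, [], t => by rw [stuffle_one_right, stuffle_one_left]
  | u, v, [] => by rw [stuffle_one_right, stuffle_one_right]
  | a :: u, b :: v, c :: t => by
      simp only [← consLetter_single]
      rw [stuffle_stuffle_consLetter, consLetter_stuffle_stuffle]
      simp only [consLetter_single]
      rw [stuffle_assoc_single u (b :: v) (c :: t), stuffle_assoc_single (a :: u) v (c :: t),
        stuffle_assoc_single (a :: u) (b :: v) t, stuffle_assoc_single u v (c :: t),
        stuffle_assoc_single u (b :: v) t, stuffle_assoc_single (a :: u) v t,
        stuffle_assoc_single u v t]
termination_by u v t => u.length + v.length + t.length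

lemma stuffle_assoc (f g h : HY) : stuffle (stuffle f g) h = stuffle f (stuffle g h) := by
  induction f using HY.induction_on_word generalizing g h with
  | add f f' hf hf' => simp only [map_add, LinearMap.add_apply, hf, hf']
  | smul c f hf => simp only [map_smul, LinearMap.smul_apply, hf]
  | word u =>
    induction g using HY.induction_on_word generalizing h with
    | add g g' hg hg' => simp only [map_add, LinearMap.add_apply, hg, hg']
    | smul c g hg => simp only [map_smul, LinearMap.smul_apply, hg]
    | word v =>
      induction h using HY.induction_on_word with
      | add h h' hh hh' => simp only [map_add, hh, hh']
      | smul c h hh => simp only [map_smul, hh]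
      | word t => exact stuffle_assoc_single u v t

/-- (ℚ⟨Y⟩, *) is a commutative and associative ℚ-algebra with unit the empty word 1:
the harmonic product is ℚ-bilinear, commutative, associative, and unital. -/
theorem harmonic_comm_assoc_algebra :
    (∀ f g h : HY, hMul (f + g) h = hMul f h + hMul g h) ∧
    (∀ f g h : HY, hMul f (g + h) = hMul f g + hMul f h) ∧
    (∀ (c : ℚ) (f g : HY), hMul (c • f) g = c • hMul f g) ∧
    (∀ (c : ℚ) (f g : HY), hMul f (c • g) = c • hMul f g) ∧
    (∀ f g : HY, hMul f g = hMul g f) ∧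
    (∀ f g h : HY, hMul (hMul f g) h = hMul f (hMul g h)) ∧
    (∀ f : HY, hMul (Finsupp.single ([] : YW) (1 : ℚ)) f = f) ∧
    (∀ f : HY, hMul f (Finsupp.single ([] : YW) (1 : ℚ)) = f) := by
  simp only [hMul_eq_stuffle]
  exact ⟨fun f g h => by rw [map_add, LinearMap.add_apply], fun f g h => map_add _ g h,
    fun c f g => by rw [map_smul, LinearMap.smul_apply], fun c f g => map_smul _ c g,
    stuffle_comm, stuffle_assoc, stuffle_one_left, stuffle_one_right⟩
end

section
/- Let R be a commutative ℚ-algebra and let Φ₁, Φ₂ ∈ TM₁(R), i.e. series in R⟨⟨x₀,x₁⟩⟩ whose coefficient of every power x₀^k (k ≥ 0) vanishes and whose coefficient of x₁ equals 1. Define Φ₁ ⊛₁ Φ₂ := κ_{Φ₁}(Φ₂), where κ_f is the continuous R-algebra endomorphism of R⟨⟨x₀,x₁⟩⟩ sending x₀ ↦ x₀ and x₁ ↦ f. Then (TM₁(R), ⊛₁) is a group with identity element x₁. -/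
/-- Words in the letters x₀, x₁ (0 ↦ x₀, 1 ↦ x₁). -/
abbrev W : Type := List (Fin 2)

variable {R : Type*} [CommRing R] [Algebra ℚ R]

/-- The generator x₁ of R⟨⟨x₀,x₁⟩⟩ (series realized as coefficient functions on words). -/
def x1R : W → R := fun w => if w = [(1 : Fin 2)] then 1 else 0

/-- The generator x₀ of R⟨⟨x₀,x₁⟩⟩. -/
def x0R : W → R := fun w => if w = [(0 : Fin 2)] then 1 else 0

/-- The unit 1 of R⟨⟨x₀,x₁⟩⟩. -/
def oneR : W → R := fun w => if w = [] then 1 else 0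

/-- The concatenation product of series. -/
def cmulR (f g : W → R) : W → R := fun w =>
  ∑ i ∈ Finset.range (w.length + 1), f (w.take i) * g (w.drop i)

/-- The image under the continuous R-algebra endomorphism κ_f (x₀ ↦ x₀, x₁ ↦ f) of a
single word, as a series: the concatenation product of the images of its letters. -/
def wordImage (f : W → R) : W → (W → R)
  | [] => oneR
  | a :: t => cmulR (if a = (1 : Fin 2) then f else x0R) (wordImage f t)

/-- κ_f applied to a series Φ: Σ_w ⟨Φ|w⟩ κ_f(w).  For f with vanishing constant term
(in particular f ∈ TM₁(R)) only words of length ≤ |w'| contribute to the coefficient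
at w', so the sum below computes κ_f(Φ). -/
def kappa (f Φ : W → R) : W → R := fun w =>
  ∑ n ∈ Finset.range (w.length + 1), ∑ v : Fin n → Fin 2,
    Φ (List.ofFn v) * wordImage f (List.ofFn v) w

/-- Membership in TM₁(R): ⟨Φ | x₀^k⟩ = 0 for all k ≥ 0 (including the constant term)
and ⟨Φ | x₁⟩ = 1. -/
def TM1mem (Φ : W → R) : Prop :=
  (∀ k : ℕ, Φ (List.replicate k (0 : Fin 2)) = 0) ∧ Φ [(1 : Fin 2)] = 1

set_option linter.unusedSectionVars false

lemma cmul_one_left (f : W → R) : cmulR oneR f = f := by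
  funext w
  unfold cmulR
  rw [Finset.sum_eq_single 0]
  · simp [oneR]
  · intro i hi h0
    have : w.take i ≠ [] := by
      intro h
      rcases List.take_eq_nil_iff.mp h with h | h
      · exact h0 h
      · simp [h] at hi; omega
    simp [oneR, this]
  · simp

lemma cmul_one_right (f : W → R) : cmulR f oneR = f := by
  funext w
  unfold cmulR
  rw [Finset.sum_eq_single w.length]
  · simp [oneR]
  · intro i hi h0
    have : w.drop i ≠ [] := by
      intro h
      rw [List.drop_eq_nil_iff] at h
      simp at hi; omega
    simp [oneR, this]
  · simp

lemma cmul_assoc (f g h : W → R) : cmulR (cmulR f g) h = cmulR f (cmulR g h) := by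
  funext w
  unfold cmulR
  have L : ∀ i ∈ Finset.range (w.length + 1),
      (∑ j ∈ Finset.range ((w.take i).length + 1), f ((w.take i).take j) * g ((w.take i).drop j))
        * h (w.drop i)
      = ∑ j ∈ Finset.range (i + 1), f (w.take j) * g ((w.drop j).take (i - j)) * h (w.drop i) := by
    intro i hi
    simp only [Finset.mem_range] at hi
    rw [Finset.sum_mul]
    apply Finset.sum_congr
    · congr 1
      rw [List.length_take]
      omega
    · intro j hj
      simp only [Finset.mem_range] at hj
      rw [List.take_take, List.drop_take, min_eq_left (by omega)]
  rw [Finset.sum_congr rfl L]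
  have Rr : ∀ j ∈ Finset.range (w.length + 1),
      f (w.take j) * (∑ k ∈ Finset.range ((w.drop j).length + 1),
        g ((w.drop j).take k) * h ((w.drop j).drop k))
      = ∑ k ∈ Finset.range (w.length - j + 1),
        f (w.take j) * (g ((w.drop j).take k) * h (w.drop (j + k))) := by
    intro j hj
    rw [Finset.mul_sum]
    apply Finset.sum_congr
    · congr 1
      rw [List.length_drop]
    · intro k hk
      rw [List.drop_drop]
  rw [Finset.sum_congr rfl Rr]
  rw [Finset.sum_sigma', Finset.sum_sigma']
  apply Finset.sum_nbij' (fun p => ⟨p.2, p.1 - p.2⟩) (fun p => ⟨p.1 + p.2, p.1⟩)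
  · rintro ⟨i, j⟩ hm
    simp only [Finset.mem_sigma, Finset.mem_range] at hm ⊢
    try omega
  · rintro ⟨j, k⟩ hm
    simp only [Finset.mem_sigma, Finset.mem_range] at hm ⊢
    try omega
  · rintro ⟨i, j⟩ hm
    simp only [Finset.mem_sigma, Finset.mem_range] at hm
    have h3 : j + (i - j) = i := by omega
    rw [h3]
  · rintro ⟨j, k⟩ hm
    simp only [Finset.mem_sigma, Finset.mem_range] at hm
    have h3 : j + k - j = k := by omega
    rw [h3]
  · rintro ⟨i, j⟩ hm
    simp only [Finset.mem_sigma, Finset.mem_range] at hm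
    have h2 : j + (i - j) = i := by omega
    rw [h2]
    ring


lemma wordImage_append (f : W → R) (u v : W) :
    wordImage f (u ++ v) = cmulR (wordImage f u) (wordImage f v) := by
  induction u with
  | nil => simp [wordImage, cmul_one_left]
  | cons a t ih => simp [wordImage, ih, cmul_assoc]

lemma wordImage_single (f : W → R) (a : Fin 2) :
    wordImage f [a] = if a = (1 : Fin 2) then f else x0R := by
  simp [wordImage, cmul_one_right]

/-- Truncation: if f has zero constant term, words longer than w don't contribute. -/
lemma wordImage_eq_zero (f : W → R) (hf : f [] = 0) :
    ∀ v w : W, w.length < v.length → wordImage f v w = 0 := by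
  intro v
  induction v with
  | nil => intro w h; simp at h
  | cons a t ih =>
    intro w h
    simp only [wordImage, cmulR]
    apply Finset.sum_eq_zero
    intro i hi
    simp only [Finset.mem_range] at hi
    rcases Nat.eq_zero_or_pos i with h0 | h0
    · subst h0
      split <;> simp [hf, x0R]
    · rw [ih (w.drop i) (by simp [List.length_drop]; simp at h; omega), mul_zero]

/-- The finset of all words of length < N. -/
def wordsLT (N : ℕ) : Finset W :=
  (Finset.range N).biUnion (fun n => Finset.image List.ofFn (Finset.univ : Finset (Fin n → Fin 2)))

lemma mem_wordsLT {N : ℕ} {v : W} : v ∈ wordsLT N ↔ v.length < N := by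
  simp only [wordsLT, Finset.mem_biUnion, Finset.mem_range, Finset.mem_image, Finset.mem_univ,
    true_and]
  constructor
  · rintro ⟨n, hn, g, rfl⟩
    simpa using hn
  · intro h
    exact ⟨v.length, h, v.get, List.ofFn_get v⟩

lemma sum_fn_eq_sum_words (n : ℕ) (F : W → R) :
    (∑ g : Fin n → Fin 2, F (List.ofFn g))
      = ∑ v ∈ Finset.image List.ofFn (Finset.univ : Finset (Fin n → Fin 2)), F v := by
  rw [Finset.sum_image]
  intro a _ b _ h
  exact List.ofFn_injective h

/-- kappa as a sum over the finset of words of length ≤ |w|. -/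
lemma kappa_eq_sum (f Φ : W → R) (w : W) :
    kappa f Φ w = ∑ v ∈ wordsLT (w.length + 1), Φ v * wordImage f v w := by
  unfold kappa wordsLT
  rw [Finset.sum_biUnion]
  · exact Finset.sum_congr rfl (fun n _ => sum_fn_eq_sum_words n (fun v => Φ v * wordImage f v w))
  · intro a ha b hb hab
    simp only [Function.onFun]
    rw [Finset.disjoint_left]
    intro v hva hvb
    simp only [Finset.mem_image, Finset.mem_univ, true_and] at hva hvb
    obtain ⟨g, rfl⟩ := hva
    obtain ⟨g', he⟩ := hvb
    apply hab
    have := congrArg List.length he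
    simpa using this.symm

/-- Extension of the sum defining kappa to any larger length bound. -/
lemma kappa_eq_sum' (f Φ : W → R) (hf : f [] = 0) (w : W) (N : ℕ) (hN : w.length < N) :
    kappa f Φ w = ∑ v ∈ wordsLT N, Φ v * wordImage f v w := by
  rw [kappa_eq_sum]
  apply Finset.sum_subset
  · intro v hv
    rw [mem_wordsLT] at hv ⊢
    omega
  · intro v hv hnv
    rw [mem_wordsLT] at hv hnv
    rw [wordImage_eq_zero f hf v w (by omega), mul_zero]


lemma kappa_mul (f A B : W → R) (hf : f [] = 0) :
    kappa f (cmulR A B) = cmulR (kappa f A) (kappa f B) := by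
  funext w
  set M := w.length with hM
  rw [kappa_eq_sum]
  have step1 : ∀ v ∈ wordsLT (M + 1),
      cmulR A B v * wordImage f v w
        = ∑ j ∈ Finset.range (v.length + 1),
            A (v.take j) * B (v.drop j) * wordImage f v w := by
    intro v _
    rw [cmulR, Finset.sum_mul]
  rw [Finset.sum_congr rfl step1, Finset.sum_sigma']
  have step2 :
      (∑ p ∈ (wordsLT (M+1)).sigma (fun v => Finset.range (v.length + 1)),
        A (p.1.take p.2) * B (p.1.drop p.2) * wordImage f p.1 w)
      = ∑ p ∈ ((wordsLT (M+1)) ×ˢ (wordsLT (M+1))).filter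
          (fun p => p.1.length + p.2.length ≤ M),
          A p.1 * B p.2 * wordImage f (p.1 ++ p.2) w := by
    apply Finset.sum_nbij' (fun p => (p.1.take p.2, p.1.drop p.2))
      (fun p => ⟨p.1 ++ p.2, p.1.length⟩)
    · rintro ⟨v, j⟩ hm
      simp only [Finset.mem_sigma, Finset.mem_range, mem_wordsLT] at hm
      simp only [Finset.mem_filter, Finset.mem_product, mem_wordsLT]
      simp only [List.length_take, List.length_drop]
      omega
    · rintro ⟨a, b⟩ hm
      simp only [Finset.mem_filter, Finset.mem_product, mem_wordsLT] at hm
      simp only [Finset.mem_sigma, Finset.mem_range, mem_wordsLT, List.length_append]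
      omega
    · rintro ⟨v, j⟩ hm
      simp only [Finset.mem_sigma, Finset.mem_range, mem_wordsLT] at hm
      have h1 : v.take j ++ v.drop j = v := List.take_append_drop j v
      have h2 : (v.take j).length = j := by rw [List.length_take]; omega
      simp only [h1, h2]
    · rintro ⟨a, b⟩ hm
      simp only [List.take_left, List.drop_left]
    · rintro ⟨v, j⟩ hm
      have h1 : v.take j ++ v.drop j = v := List.take_append_drop j v
      rw [h1]
  rw [step2]
  rw [Finset.sum_filter_of_ne (by
    intro p hp hne
    by_contra hlen
    push_neg at hlen
    rw [wordImage_eq_zero f hf (p.1 ++ p.2) w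
      (by rw [List.length_append]; omega), mul_zero] at hne
    exact hne rfl)]
  rw [Finset.sum_product]
  have lhs2 : ∀ a ∈ wordsLT (M+1), ∀ b ∈ wordsLT (M+1),
      A a * B b * wordImage f (a ++ b) w
      = ∑ i ∈ Finset.range (M+1),
          (A a * wordImage f a (w.take i)) * (B b * wordImage f b (w.drop i)) := by
    intro a _ b _
    rw [wordImage_append, cmulR, Finset.mul_sum]
    apply Finset.sum_congr rfl
    intro i _
    ring
  have rhs2 : cmulR (kappa f A) (kappa f B) w
      = ∑ i ∈ Finset.range (M+1), ∑ a ∈ wordsLT (M+1), ∑ b ∈ wordsLT (M+1),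
          (A a * wordImage f a (w.take i)) * (B b * wordImage f b (w.drop i)) := by
    rw [cmulR]
    apply Finset.sum_congr rfl
    intro i hi
    rw [kappa_eq_sum' f A hf _ (M+1) (by rw [List.length_take]; omega),
        kappa_eq_sum' f B hf _ (M+1) (by rw [List.length_drop]; omega),
        Finset.sum_mul_sum]
  rw [rhs2]
  calc ∑ a ∈ wordsLT (M+1), ∑ b ∈ wordsLT (M+1), A a * B b * wordImage f (a ++ b) w
      = ∑ a ∈ wordsLT (M+1), ∑ b ∈ wordsLT (M+1), ∑ i ∈ Finset.range (M+1),
          (A a * wordImage f a (w.take i)) * (B b * wordImage f b (w.drop i)) := by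
        apply Finset.sum_congr rfl; intro a ha
        apply Finset.sum_congr rfl; intro b hb
        exact lhs2 a ha b hb
    _ = ∑ a ∈ wordsLT (M+1), ∑ i ∈ Finset.range (M+1), ∑ b ∈ wordsLT (M+1),
          (A a * wordImage f a (w.take i)) * (B b * wordImage f b (w.drop i)) := by
        apply Finset.sum_congr rfl; intro a ha
        exact Finset.sum_comm
    _ = ∑ i ∈ Finset.range (M+1), ∑ a ∈ wordsLT (M+1), ∑ b ∈ wordsLT (M+1),
          (A a * wordImage f a (w.take i)) * (B b * wordImage f b (w.drop i)) := by
        exact Finset.sum_comm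


lemma kappa_one (f : W → R) : kappa f oneR = oneR := by
  funext w
  rw [kappa_eq_sum]
  rw [Finset.sum_eq_single ([] : W)]
  · simp [oneR, wordImage]
  · intro v _ hv
    simp [oneR, hv]
  · intro h
    exact absurd (mem_wordsLT.mpr (by simp)) h

lemma kappa_x0 (f : W → R) : kappa f x0R = x0R := by
  funext w
  rw [kappa_eq_sum]
  rcases w with _ | ⟨b, t⟩
  · apply Finset.sum_eq_zero
    intro v hv
    rw [mem_wordsLT] at hv
    simp at hv
    subst hv
    simp [x0R]
  · rw [Finset.sum_eq_single ([(0 : Fin 2)] : W)]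
    · rw [wordImage_single]
      norm_num [x0R]
    · intro v _ hv
      simp [x0R, hv]
    · intro h
      exact absurd (mem_wordsLT.mpr (by simp)) h

lemma wordImage_kappa (f g : W → R) (hf : f [] = 0) (v : W) :
    wordImage (kappa f g) v = kappa f (wordImage g v) := by
  induction v with
  | nil => rw [wordImage, wordImage, kappa_one]
  | cons a t ih =>
    rw [wordImage, wordImage, ih]
    by_cases ha : a = (1 : Fin 2)
    · subst ha
      simp only [reduceIte]
      rw [kappa_mul _ _ _ hf]
    · rw [if_neg ha, if_neg ha, kappa_mul _ _ _ hf, kappa_x0]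

lemma kappa_assoc (f g Φ : W → R) (hf : f [] = 0) (hg : g [] = 0) :
    kappa (kappa f g) Φ = kappa f (kappa g Φ) := by
  funext w
  rw [kappa_eq_sum, kappa_eq_sum]
  have L : ∀ v ∈ wordsLT (w.length + 1),
      Φ v * wordImage (kappa f g) v w
      = ∑ u ∈ wordsLT (w.length + 1), Φ v * (wordImage g v u * wordImage f u w) := by
    intro v _
    rw [wordImage_kappa f g hf, kappa_eq_sum, Finset.mul_sum]
  have Rr : ∀ u ∈ wordsLT (w.length + 1),
      kappa g Φ u * wordImage f u w
      = ∑ v ∈ wordsLT (w.length + 1), Φ v * (wordImage g v u * wordImage f u w) := by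
    intro u hu
    rw [kappa_eq_sum' g Φ hg u (w.length + 1) (mem_wordsLT.mp hu), Finset.sum_mul]
    apply Finset.sum_congr rfl
    intro v _
    ring
  rw [Finset.sum_congr rfl L, Finset.sum_congr rfl Rr, Finset.sum_comm]


lemma cmul_single (f : W → R) (a : Fin 2) (hfa : ∀ u, f u = if u = [a] then 1 else 0)
    (g : W → R) : ∀ w, cmulR f g w =
      (match w with | [] => 0 | b :: t => if b = a then g t else 0) := by
  intro w
  cases w with
  | nil => simp [cmulR, hfa]
  | cons b t =>
    show cmulR f g (b :: t) = if b = a then g t else 0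
    have h1 : (b :: t).take 1 = [b] := rfl
    have h2 : (b :: t).drop 1 = t := rfl
    rw [cmulR, Finset.sum_eq_single 1]
    · rw [h1, h2, hfa]
      by_cases hb : b = a
      · simp [hb]
      · have : ([b] : W) ≠ [a] := by simpa using hb
        simp [this, hb]
    · intro i hi hne
      rcases Nat.eq_zero_or_pos i with h0 | h0
      · subst h0
        simp [hfa]
      · have hlen : ((b :: t).take i).length ≠ 1 := by
          rw [List.length_take, List.length_cons]
          simp only [Finset.mem_range, List.length_cons] at hi
          omega
        rw [hfa, if_neg (by intro h; apply hlen; rw [h]; rfl), zero_mul]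
    · intro h
      simp at h

lemma wordImage_x1 (v : W) : wordImage x1R v = fun w => if w = v then (1 : R) else 0 := by
  induction v with
  | nil =>
    funext w
    simp [wordImage, oneR]
  | cons a t ih =>
    funext w
    have hfa : ∀ u, (if a = (1 : Fin 2) then x1R else x0R) u = if u = [a] then (1 : R) else 0 := by
      intro u
      by_cases ha : a = (1 : Fin 2)
      · simp [ha, x1R]
      · have ha0 : a = (0 : Fin 2) := by omega
        simp [ha, ha0, x0R]
    rw [wordImage, ih, cmul_single _ a hfa]
    cases w with
    | nil => simp
    | cons b s =>
      by_cases hb : b = a <;> by_cases hs : s = t <;> simp [hb, hs]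

lemma wordImage_rep0 (f : W → R) (m : ℕ) :
    wordImage f (List.replicate m (0 : Fin 2))
      = fun w => if w = List.replicate m (0 : Fin 2) then (1 : R) else 0 := by
  induction m with
  | zero =>
    funext w
    simp [wordImage, oneR]
  | succ m ih =>
    funext w
    rw [List.replicate_succ, wordImage, ih]
    have hfa : ∀ u, (if (0 : Fin 2) = (1 : Fin 2) then f else x0R) u
        = if u = [(0 : Fin 2)] then (1 : R) else 0 := by
      intro u
      simp [x0R]
    rw [cmul_single _ _ hfa]
    cases w with
    | nil => simp
    | cons b s =>
      by_cases hb : b = (0 : Fin 2) <;>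
        by_cases hs : s = List.replicate m (0 : Fin 2) <;> simp [hb, hs]

lemma wordImage_zero_of_one_mem (f : W → R) (hf : ∀ j, f (List.replicate j (0 : Fin 2)) = 0) :
    ∀ v : W, (1 : Fin 2) ∈ v → ∀ k, wordImage f v (List.replicate k (0 : Fin 2)) = 0 := by
  intro v
  induction v with
  | nil => intro h; simp at h
  | cons a t ih =>
    intro hmem k
    rw [wordImage, cmulR]
    apply Finset.sum_eq_zero
    intro i hi
    rw [List.take_replicate, List.drop_replicate]
    by_cases ha : a = (1 : Fin 2)
    · rw [if_pos ha, hf, zero_mul]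
    · have hmt : (1 : Fin 2) ∈ t := by
        rcases List.mem_cons.mp hmem with h | h
        · exact absurd h.symm ha
        · exact h
      rw [ih hmt (k - i), mul_zero]

lemma wordImage_diag (Φ : W → R) (h0 : Φ [] = 0) (h00 : Φ [(0 : Fin 2)] = 0)
    (h1 : Φ [(1 : Fin 2)] = 1) :
    ∀ v w : W, v.length = w.length → wordImage Φ v w = if v = w then 1 else 0 := by
  intro v
  induction v with
  | nil =>
    intro w hlen
    have : w = [] := by
      cases w
      · rfl
      · simp at hlen
    subst this
    simp [wordImage, oneR]
  | cons a t ih =>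
    intro w hlen
    cases w with
    | nil => simp at hlen
    | cons b s =>
      simp only [List.length_cons, Nat.add_right_cancel_iff] at hlen
      have h1' : (b :: s).take 1 = [b] := rfl
      have h2' : (b :: s).drop 1 = s := rfl
      rw [wordImage, cmulR, Finset.sum_eq_single 1]
      · rw [h1', h2', ih s hlen]
        have hL : (if a = (1 : Fin 2) then Φ else x0R) [b] = if a = b then (1 : R) else 0 := by
          fin_cases a <;> fin_cases b <;> simp [x0R, h00, h1]
        rw [hL]
        by_cases hab : a = b <;> by_cases hts : t = s <;> simp [hab, hts]
      · intro i hi hne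
        rcases Nat.eq_zero_or_pos i with hz | hz
        · subst hz
          have : (if a = (1 : Fin 2) then Φ else x0R) [] = 0 := by
            split <;> simp [h0, x0R]
          simp [this]
        · have : ((b :: s).drop i).length < t.length := by
            rw [List.length_drop, List.length_cons, hlen]
            simp only [Finset.mem_range, List.length_cons] at hi
            omega
          rw [wordImage_eq_zero Φ h0 t _ this, mul_zero]
      · intro h
        simp at h


lemma TM1_nil {Φ : W → R} (h : TM1mem Φ) : Φ [] = 0 := by simpa using h.1 0

lemma TM1_zero {Φ : W → R} (h : TM1mem Φ) : Φ [(0 : Fin 2)] = 0 := by simpa using h.1 1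

lemma rep_ne_x1 (k : ℕ) : List.replicate k (0 : Fin 2) ≠ [(1 : Fin 2)] := by
  intro h
  rcases k with _ | k
  · simp at h
  · rw [List.replicate_succ] at h
    simp at h

lemma x1R_rep (k : ℕ) : x1R (List.replicate k (0 : Fin 2)) = (0 : R) := by
  rw [x1R]
  exact if_neg (rep_ne_x1 k)

lemma TM1_closure (Φ₁ Φ₂ : W → R) (h₁ : TM1mem Φ₁) (h₂ : TM1mem Φ₂) :
    TM1mem (kappa Φ₁ Φ₂) := by
  constructor
  · intro k
    rw [kappa_eq_sum]
    apply Finset.sum_eq_zero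
    intro v hv
    by_cases hmem : (1 : Fin 2) ∈ v
    · rw [wordImage_zero_of_one_mem Φ₁ h₁.1 v hmem k, mul_zero]
    · have hv0 : v = List.replicate v.length (0 : Fin 2) := by
        apply List.eq_replicate_of_mem
        intro b hb
        have hb1 : b ≠ 1 := fun h => hmem (h ▸ hb)
        omega
      rw [hv0, h₂.1, zero_mul]
  · rw [kappa_eq_sum, Finset.sum_eq_single [(1 : Fin 2)]]
    · rw [wordImage_single]
      simp [h₂.2, h₁.2]
    · intro v hv hne
      rcases v with _ | ⟨a, _ | ⟨b, t⟩⟩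
      · rw [TM1_nil h₂, zero_mul]
      · by_cases ha : a = (1 : Fin 2)
        · exact absurd (by rw [ha]) hne
        · have ha0 : a = (0 : Fin 2) := by omega
          subst ha0
          rw [wordImage_single]
          norm_num [x0R]
      · rw [mem_wordsLT] at hv
        simp at hv
    · intro h
      exact absurd (mem_wordsLT.mpr (by simp)) h

lemma kappa_x1_left (Φ : W → R) : kappa x1R Φ = Φ := by
  funext w
  rw [kappa_eq_sum, Finset.sum_eq_single w]
  · rw [wordImage_x1]
    simp
  · intro v _ hne
    rw [wordImage_x1]
    simp [Ne.symm hne]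
  · intro h
    exact absurd (mem_wordsLT.mpr (by omega)) h

lemma kappa_x1_right (Φ : W → R) (h : TM1mem Φ) : kappa Φ x1R = Φ := by
  funext w
  rw [kappa_eq_sum, Finset.sum_eq_single [(1 : Fin 2)]]
  · rw [wordImage_single]
    simp [x1R]
  · intro v _ hne
    rw [x1R, if_neg hne, zero_mul]
  · intro hm
    rw [mem_wordsLT] at hm
    simp at hm
    subst hm
    rw [wordImage_single]
    simp [x1R, TM1_nil h]

/-- The inverse for ⊛₁, defined by strong recursion on word length. -/
def invF (Φ : W → R) (w : W) : R :=
  x1R w - ∑ v ∈ (wordsLT w.length).attach, invF Φ v.1 * wordImage Φ v.1 w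
termination_by w.length
decreasing_by exact mem_wordsLT.mp v.2

lemma invF_eq (Φ : W → R) (w : W) :
    invF Φ w = x1R w - ∑ v ∈ wordsLT w.length, invF Φ v * wordImage Φ v w := by
  rw [invF, ← Finset.sum_attach (wordsLT w.length) (fun v => invF Φ v * wordImage Φ v w)]

lemma sum_words_split (F : W → R) (n : ℕ) :
    ∑ v ∈ wordsLT (n + 1), F v
      = (∑ v ∈ Finset.image List.ofFn (Finset.univ : Finset (Fin n → Fin 2)), F v)
        + ∑ v ∈ wordsLT n, F v := by
  have hdisj : Disjoint
      (Finset.image List.ofFn (Finset.univ : Finset (Fin n → Fin 2))) (wordsLT n) := by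
    rw [Finset.disjoint_left]
    intro v hv hv'
    have h1 : v.length = n := by
      rw [Finset.mem_image] at hv
      obtain ⟨g, _, rfl⟩ := hv
      simp
    have h2 : v.length < n := mem_wordsLT.mp hv'
    omega
  rw [wordsLT, Finset.range_add_one, Finset.biUnion_insert,
    show ((Finset.range n).biUnion fun m => Finset.image List.ofFn
      (Finset.univ : Finset (Fin m → Fin 2))) = wordsLT n from rfl,
    Finset.sum_union hdisj]

lemma invF_mem (Φ : W → R) (h : TM1mem Φ) : TM1mem (invF Φ) := by
  constructor
  · intro k
    rw [invF_eq, x1R_rep]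
    rw [Finset.sum_eq_zero, sub_zero]
    intro v hv
    by_cases hmem : (1 : Fin 2) ∈ v
    · rw [wordImage_zero_of_one_mem Φ h.1 v hmem k, mul_zero]
    · have hv0 : v = List.replicate v.length (0 : Fin 2) := by
        apply List.eq_replicate_of_mem
        intro b hb
        have hb1 : b ≠ 1 := fun hh => hmem (hh ▸ hb)
        omega
      have hvl : v.length < k := by simpa using mem_wordsLT.mp hv
      rw [hv0, wordImage_rep0]
      have : List.replicate k (0 : Fin 2) ≠ List.replicate v.length (0 : Fin 2) := by
        intro hh
        have h3 := congrArg List.length hh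
        simp at h3
        omega
      simp only [this, if_false, mul_zero]
  · rw [invF_eq]
    have hs : ∑ v ∈ wordsLT [(1 : Fin 2)].length, invF Φ v * wordImage Φ v [(1 : Fin 2)] = 0 := by
      apply Finset.sum_eq_zero
      intro v hv
      have hv' : v.length < 1 := by simpa using mem_wordsLT.mp hv
      have : v = [] := by
        rw [← List.length_eq_zero_iff]
        omega
      subst this
      show invF Φ [] * oneR [(1 : Fin 2)] = 0
      simp [oneR]
    rw [hs]
    simp [x1R]

lemma invF_right (Φ : W → R) (h : TM1mem Φ) : kappa Φ (invF Φ) = x1R := by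
  funext w
  rw [kappa_eq_sum, sum_words_split]
  have hdiag : (∑ v ∈ Finset.image List.ofFn (Finset.univ : Finset (Fin w.length → Fin 2)),
      invF Φ v * wordImage Φ v w) = invF Φ w := by
    rw [Finset.sum_eq_single w]
    · rw [wordImage_diag Φ (TM1_nil h) (TM1_zero h) h.2 w w rfl]
      simp
    · intro v hv hne
      have hlen : v.length = w.length := by
        rw [Finset.mem_image] at hv
        obtain ⟨g, _, rfl⟩ := hv
        simp
      rw [wordImage_diag Φ (TM1_nil h) (TM1_zero h) h.2 v w hlen, if_neg hne, mul_zero]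
    · intro hm
      exact absurd (Finset.mem_image.mpr ⟨w.get, Finset.mem_univ _, List.ofFn_get w⟩) hm
  rw [hdiag, invF_eq]
  ring

lemma tm1_heads {Φ : W → R} (h : TM1mem Φ) : Φ [] = 0 := TM1_nil h

theorem TM1_group' :
    (∀ Φ₁ Φ₂ : W → R, TM1mem Φ₁ → TM1mem Φ₂ → TM1mem (kappa Φ₁ Φ₂)) ∧
    (∀ Φ₁ Φ₂ Φ₃ : W → R, TM1mem Φ₁ → TM1mem Φ₂ → TM1mem Φ₃ →
      kappa (kappa Φ₁ Φ₂) Φ₃ = kappa Φ₁ (kappa Φ₂ Φ₃)) ∧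
    TM1mem (x1R : W → R) ∧
    (∀ Φ : W → R, TM1mem Φ → kappa x1R Φ = Φ ∧ kappa Φ x1R = Φ) ∧
    (∀ Φ : W → R, TM1mem Φ → ∃ Φ' : W → R, TM1mem Φ' ∧
      kappa Φ Φ' = x1R ∧ kappa Φ' Φ = x1R) := by
  have hx1 : TM1mem (x1R : W → R) := ⟨x1R_rep, by simp [x1R]⟩
  refine ⟨TM1_closure, ?_, hx1, ?_, ?_⟩
  · intro Φ₁ Φ₂ Φ₃ h1 h2 h3
    exact kappa_assoc Φ₁ Φ₂ Φ₃ (TM1_nil h1) (TM1_nil h2)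
  · intro Φ h
    exact ⟨kappa_x1_left Φ, kappa_x1_right Φ h⟩
  · intro Φ h
    set Φ' := invF Φ with hΦ'
    have h' : TM1mem Φ' := invF_mem Φ h
    have hr : kappa Φ Φ' = x1R := invF_right Φ h
    refine ⟨Φ', h', hr, ?_⟩
    set Φ'' := invF Φ' with hΦ''
    have h'' : TM1mem Φ'' := invF_mem Φ' h'
    have hr' : kappa Φ' Φ'' = x1R := invF_right Φ' h'
    set a := kappa Φ' Φ with ha
    have hamem : TM1mem a := TM1_closure Φ' Φ h' h
    have key : kappa a Φ' = Φ' := by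
      rw [ha, kappa_assoc Φ' Φ Φ' (TM1_nil h') (TM1_nil h), hr, kappa_x1_right Φ' h']
    calc a = kappa a x1R := (kappa_x1_right a hamem).symm
      _ = kappa a (kappa Φ' Φ'') := by rw [hr']
      _ = kappa (kappa a Φ') Φ'' := (kappa_assoc a Φ' Φ'' (TM1_nil hamem) (TM1_nil h')).symm
      _ = kappa Φ' Φ'' := by rw [key]
      _ = x1R := hr'


/-- (TM₁(R), ⊛₁) with Φ₁ ⊛₁ Φ₂ := κ_{Φ₁}(Φ₂) is a group with identity element x₁. -/
theorem TM1_group (R : Type*) [CommRing R] [Algebra ℚ R] :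
    (∀ Φ₁ Φ₂ : W → R, TM1mem Φ₁ → TM1mem Φ₂ → TM1mem (kappa Φ₁ Φ₂)) ∧
    (∀ Φ₁ Φ₂ Φ₃ : W → R, TM1mem Φ₁ → TM1mem Φ₂ → TM1mem Φ₃ →
      kappa (kappa Φ₁ Φ₂) Φ₃ = kappa Φ₁ (kappa Φ₂ Φ₃)) ∧
    TM1mem (x1R : W → R) ∧
    (∀ Φ : W → R, TM1mem Φ → kappa x1R Φ = Φ ∧ kappa Φ x1R = Φ) ∧
    (∀ Φ : W → R, TM1mem Φ → ∃ Φ' : W → R, TM1mem Φ' ∧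
      kappa Φ Φ' = x1R ∧ kappa Φ' Φ = x1R) :=
  TM1_group'
end
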